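/- Fix an integer d ≥ 2 and define F̃ : [0,1] → ℝ by F̃(x) = (3−4d)x for x ∈ [0,1/4], F̃(x) = (2d−3)x + 3(1−d)/2 for x ∈ [1/4,3/4], and F̃(x) = (3−4d)x + 3(d−1) for x ∈ [3/4,1]; define F : ℝ → ℝ by F(x) = F̃(x − ⌊x⌋) − d⌊x⌋. Then |F(x)| > |x| for every x ∈ ℝ \ {−3/4, 0, 3/4}; moreover F(x) = −x for x ∈ {−3/4, 0, 3/4}. -/
import Mathlib


/-- The piecewise affine map `F̃ : [0,1] → ℝ` from the degree `-d` example
(given here by a formula valid on `[0,1]`). -/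
noncomputable def Ftilde (d : ℤ) (x : ℝ) : ℝ :=
  if x ≤ 1 / 4 then (3 - 4 * d) * x
  else if x ≤ 3 / 4 then (2 * d - 3) * x + 3 * (1 - d) / 2
  else (3 - 4 * d) * x + 3 * (d - 1)

/-- The map `F(x) = F̃(x - ⌊x⌋) - d⌊x⌋`. -/
noncomputable def Fneg (d : ℤ) (x : ℝ) : ℝ :=
  Ftilde d (x - ⌊x⌋) - d * ⌊x⌋

lemma Gle (d : ℤ) (hd : 2 ≤ d) {y : ℝ} (h0 : 0 ≤ y) (h1 : y < 1) :
    Ftilde d y ≤ -y := by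
  have hD : (2:ℝ) ≤ (d:ℝ) := by exact_mod_cast hd
  unfold Ftilde
  split_ifs with h h'
  · nlinarith [mul_nonneg h0 (show (0:ℝ) ≤ 4*(d:ℝ)-4 by linarith)]
  · nlinarith [mul_nonneg (show (0:ℝ) ≤ 2*(d:ℝ)-2 by linarith)
      (show (0:ℝ) ≤ 3/4 - y by linarith)]
  · nlinarith [mul_nonneg (show (0:ℝ) ≤ (d:ℝ)-1 by linarith)
      (show (0:ℝ) ≤ 4*y - 3 by linarith)]

lemma Glt (d : ℤ) (hd : 2 ≤ d) {y : ℝ} (h0 : 0 ≤ y) (h1 : y < 1)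
    (hy0 : y ≠ 0) (hy3 : y ≠ 3/4) : Ftilde d y < -y := by
  have hD : (2:ℝ) ≤ (d:ℝ) := by exact_mod_cast hd
  have h0' : 0 < y := lt_of_le_of_ne h0 (Ne.symm hy0)
  unfold Ftilde
  split_ifs with h h'
  · nlinarith [mul_pos h0' (show (0:ℝ) < 4*(d:ℝ)-4 by linarith)]
  · have : y < 3/4 := lt_of_le_of_ne h' hy3
    nlinarith [mul_pos (show (0:ℝ) < 2*(d:ℝ)-2 by linarith) (show (0:ℝ) < 3/4 - y by linarith)]
  · nlinarith [mul_pos (show (0:ℝ) < (d:ℝ)-1 by linarith) (show (0:ℝ) < 4*y - 3 by linarith)]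

lemma Gge (d : ℤ) (hd : 2 ≤ d) {y : ℝ} (h0 : 0 ≤ y) (h1 : y < 1) :
    1 - (d:ℝ) - y ≤ Ftilde d y := by
  have hD : (2:ℝ) ≤ (d:ℝ) := by exact_mod_cast hd
  unfold Ftilde
  split_ifs with h h'
  · nlinarith [mul_nonneg (show (0:ℝ) ≤ 4*(d:ℝ)-4 by linarith)
      (show (0:ℝ) ≤ 1/4 - y by linarith)]
  · nlinarith [mul_nonneg (show (0:ℝ) ≤ 2*(d:ℝ)-2 by linarith)
      (show (0:ℝ) ≤ y - 1/4 by linarith)]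
  · nlinarith [mul_nonneg (show (0:ℝ) ≤ 4*(d:ℝ)-4 by linarith)
      (show (0:ℝ) ≤ 1 - y by linarith)]

lemma Ggt (d : ℤ) (hd : 2 ≤ d) {y : ℝ} (h0 : 0 ≤ y) (h1 : y < 1)
    (hy : y ≠ 1/4) : 1 - (d:ℝ) - y < Ftilde d y := by
  have hD : (2:ℝ) ≤ (d:ℝ) := by exact_mod_cast hd
  unfold Ftilde
  split_ifs with h h'
  · have : y < 1/4 := lt_of_le_of_ne h hy
    nlinarith [mul_pos (show (0:ℝ) < 4*(d:ℝ)-4 by linarith) (show (0:ℝ) < 1/4 - y by linarith)]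
  · have : 1/4 < y := lt_of_not_ge h
    nlinarith [mul_pos (show (0:ℝ) < 2*(d:ℝ)-2 by linarith) (show (0:ℝ) < y - 1/4 by linarith)]
  · nlinarith [mul_pos (show (0:ℝ) < 4*(d:ℝ)-4 by linarith) (show (0:ℝ) < 1 - y by linarith)]

/-- For `d ≥ 2`, the map `F` satisfies `|F(x)| > |x|` for every
`x ∉ {-3/4, 0, 3/4}`, and `F(x) = -x` for `x ∈ {-3/4, 0, 3/4}`. -/
theorem Fneg_expanding_off_exceptional_set (d : ℤ) (hd : 2 ≤ d) :
    (∀ x : ℝ, x ∉ ({-(3 / 4 : ℝ), 0, 3 / 4} : Set ℝ) → |x| < |Fneg d x|) ∧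
    (∀ x : ℝ, x ∈ ({-(3 / 4 : ℝ), 0, 3 / 4} : Set ℝ) → Fneg d x = -x) := by
  have hD : (2:ℝ) ≤ (d:ℝ) := by exact_mod_cast hd
  constructor
  · intro x hx
    simp only [Set.mem_insert_iff, Set.mem_singleton_iff, not_or] at hx
    obtain ⟨hx1, hx2, hx3⟩ := hx
    set n : ℤ := ⌊x⌋ with hn
    set y : ℝ := x - n with hy
    have h0 : 0 ≤ y := by
      have := Int.floor_le x; rw [hy]; linarith
    have h1 : y < 1 := by
      have := Int.lt_floor_add_one x; rw [hy]; linarith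
    have hxny : x = n + y := by simp [hy]
    have hF : Fneg d x = Ftilde d y - d * n := rfl
    rcases le_or_gt 0 n with hn0 | hn0
    · -- x ≥ 0
      have hnn : (0:ℝ) ≤ (n:ℝ) := by exact_mod_cast hn0
      rcases eq_or_lt_of_le hn0 with hz | hpos
      · -- n = 0
        have hn' : (n:ℝ) = 0 := by exact_mod_cast hz.symm
        have hyx : y = x := by rw [hxny, hn']; ring
        have hlt : Ftilde d y < -y :=
          Glt d hd h0 h1 (by rw [hyx]; exact hx2) (by rw [hyx]; exact hx3)
        have : -(Fneg d x) > |x| := by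
          rw [hF, hn', abs_of_nonneg (by rw [← hyx]; exact h0)]
          rw [← hyx]; linarith
        calc |x| < -(Fneg d x) := this
          _ ≤ |Fneg d x| := neg_le_abs _
      · -- n ≥ 1
        have hn1 : (1:ℝ) ≤ (n:ℝ) := by exact_mod_cast hpos
        have hle : Ftilde d y ≤ -y := Gle d hd h0 h1
        have hxpos : 0 < x := by rw [hxny]; linarith
        have : -(Fneg d x) > |x| := by
          rw [hF, abs_of_pos hxpos, hxny]
          nlinarith [mul_le_mul_of_nonneg_left hD (le_trans zero_le_one hn1)]
        calc |x| < -(Fneg d x) := this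
          _ ≤ |Fneg d x| := neg_le_abs _
    · -- n ≤ -1
      have hn1' : n ≤ -1 := by omega
      have hn1 : (n:ℝ) ≤ -1 := by
        have := (Int.cast_le (R := ℝ)).mpr hn1'; push_cast at this; exact this
      have hxneg : x < 0 := by rw [hxny]; linarith
      have key : Fneg d x > -x := by
        rw [hF, hxny]
        rcases eq_or_ne n (-1) with he | hne
        · -- n = -1
          have he' : (n:ℝ) = -1 := by rw [he]; push_cast; ring
          have hyne : y ≠ 1/4 := by
            intro h; apply hx1; rw [hxny, h, he']; norm_num
          have := Ggt d hd h0 h1 hyne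
          rw [he']; linarith
        · -- n ≤ -2
          have hn2' : n ≤ -2 := by omega
          have hn2 : (n:ℝ) ≤ -2 := by
            have := (Int.cast_le (R := ℝ)).mpr hn2'; push_cast at this; exact this
          have := Gge d hd h0 h1
          nlinarith [mul_le_mul_of_nonneg_left hn2 (show (0:ℝ) ≤ (d:ℝ) - 1 by linarith)]
      calc |x| = -x := abs_of_neg hxneg
        _ < Fneg d x := key
        _ ≤ |Fneg d x| := le_abs_self _
  · intro x hx
    rcases hx with h | h | h
    · subst h
      have hf : ⌊(-(3/4) : ℝ)⌋ = -1 := by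
        rw [Int.floor_eq_iff] <;> norm_num
      rw [Fneg, hf, Ftilde]
      push_cast
      norm_num
      ring
    · subst h
      simp [Fneg, Ftilde]
    · rw [Set.mem_singleton_iff] at h
      subst h
      have hf : ⌊(3/4 : ℝ)⌋ = 0 := by
        rw [Int.floor_eq_iff] <;> norm_num
      rw [Fneg, hf, Ftilde]
      push_cast
      norm_num
      ring
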